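/- Let G = (V,E) be an n-vertex graph and let ρ = ⊗_{j=1}^{k} ρ_j be a k-fold product state with respect to a partition P₁,…,P_k of the n qubits. If (a,b) ∈ E with a ∈ Pᵢ and b ∈ Pⱼ for i ≠ j, then |Tr(S_a ρ)| + |Tr(S_b ρ)| + |Tr(S_a S_b ρ)| ≤ 1, where S_v = X_v ⊗ (⊗_{u∈N(v)} Z_u) are the graph-state stabilizer generators. -/

import Mathlib

open ComplexOrder

/-- The Pauli `X` matrix. -/
noncomputable def pX : Matrix (Fin 2) (Fin 2) ℂ := !![0, 1; 1, 0]

/-- The Pauli `Z` matrix. -/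
noncomputable def pZ : Matrix (Fin 2) (Fin 2) ℂ := !![1, 0; 0, -1]

/-- Tensor product of a family of one-qubit operators, as an operator on `n` qubits. -/
noncomputable def tensorOp {n : ℕ} (A : Fin n → Matrix (Fin 2) (Fin 2) ℂ) :
    Matrix (Fin n → Fin 2) (Fin n → Fin 2) ℂ :=
  Matrix.of fun f g => ∏ j, A j (f j) (g j)

/-- Graph-state stabilizer generator `Sᵢ = Xᵢ ⊗ (⊗_{j ∈ N(i)} Zⱼ)`. -/
noncomputable def stab {n : ℕ} (G : SimpleGraph (Fin n)) [DecidableRel G.Adj] (i : Fin n) :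
    Matrix (Fin n → Fin 2) (Fin n → Fin 2) ℂ :=
  tensorOp fun j => if j = i then pX else if G.Adj i j then pZ else 1

/-- The edges of `G`, each represented once as an ordered pair `(i, j)` with `i < j`. -/
def edgePairs {n : ℕ} (G : SimpleGraph (Fin n)) [DecidableRel G.Adj] :
    Finset (Fin n × Fin n) :=
  Finset.univ.filter fun p => p.1 < p.2 ∧ G.Adj p.1 p.2

/-- The criterion value `W^γ_G(ρ) = ∑_{i∈V} |⟨Sᵢ⟩_ρ| + γ ∑_{(i,j)∈E} |⟨SᵢSⱼ⟩_ρ|`. -/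
noncomputable def Wgraph {n : ℕ} (G : SimpleGraph (Fin n)) [DecidableRel G.Adj] (γ : ℝ)
    (ρ : Matrix (Fin n → Fin 2) (Fin n → Fin 2) ℂ) : ℝ :=
  (∑ i, ‖(stab G i * ρ).trace‖) +
    γ * ∑ p ∈ edgePairs G, ‖(stab G p.1 * stab G p.2 * ρ).trace‖

/-- Amplitudes of the graph state `|G⟩ = ∏_{(i,j)∈E} CZ_{ij} |+⟩^{⊗n}` in the computational
basis: `⟨x|G⟩ = 2^{-n/2} ∏_{(i,j)∈E} (-1)^{x_i x_j}`. -/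
noncomputable def graphStateVec {n : ℕ} (G : SimpleGraph (Fin n)) [DecidableRel G.Adj]
    (x : Fin n → Fin 2) : ℂ :=
  ((((Real.sqrt 2)⁻¹ : ℝ) ^ n : ℝ) : ℂ) *
    ∏ p ∈ edgePairs G, (-1 : ℂ) ^ ((x p.1 : ℕ) * (x p.2 : ℕ))

/-- The graph state density matrix `|G⟩⟨G|`. -/
noncomputable def graphState {n : ℕ} (G : SimpleGraph (Fin n)) [DecidableRel G.Adj] :
    Matrix (Fin n → Fin 2) (Fin n → Fin 2) ℂ :=
  Matrix.of fun f g => graphStateVec G f * star (graphStateVec G g)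

/-- Tensor product of states of the groups of qubits given by the partition `P`. -/
noncomputable def prodState {n k : ℕ} (P : Fin n → Fin k)
    (ρs : ∀ j : Fin k,
      Matrix ({v : Fin n // P v = j} → Fin 2) ({v : Fin n // P v = j} → Fin 2) ℂ) :
    Matrix (Fin n → Fin 2) (Fin n → Fin 2) ℂ :=
  Matrix.of fun f g => ∏ j, ρs j (fun v => f v.1) (fun v => g v.1)

/-!
Expectations of tensor-product observables in a product state factor over the parts. Write
`A_j`, `B_j` for the restrictions of `S_a`, `S_b` to part `j`: they are Hermitian involutions
which commute except on the parts of `a` and of `b`, where the `X` of one generator meets the `Z`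
of the other and they anticommute. For pairwise anticommuting Hermitian involutions `Aᵢ` the
observable `O = ∑ ⟨Aᵢ⟩ Aᵢ` squares to `(∑ ⟨Aᵢ⟩²) • 1`, so `⟨O⟩² ≤ ⟨O²⟩` gives `∑ ⟨Aᵢ⟩² ≤ 1`.
Applied to `A_j, B_j, -i A_j B_j` for `j = P a, P b`, this puts the two triples
`(|⟨A_j⟩|, |⟨B_j⟩|, |⟨A_j B_j⟩|)` in the unit ball. All other factors have modulus at most `1`,
so the left-hand side is at most the inner product of the two triples, hence at most `1`.
-/

open Matrix

lemma sum_smul_mul_self_of_anticomm {ι 𝕜 R : Type*} [Fintype ι] [Field 𝕜] [CharZero 𝕜]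
    [Ring R] [Algebra 𝕜 R] {A : ι → R} (hA2 : ∀ i, A i * A i = 1)
    (hanti : Pairwise fun i j => A i * A j = -(A j * A i)) (c : ι → 𝕜) :
    (∑ i, c i • A i) * (∑ i, c i • A i) = (∑ i, c i ^ 2) • 1 := by
  classical
  have hanticomm : ∀ i j, A i * A j + A j * A i = if i = j then (2 : 𝕜) • 1 else 0 := by
    intro i j
    split_ifs with hij
    · subst hij; rw [hA2, two_smul]
    · rw [hanti hij, neg_add_cancel]
  set O := ∑ i, c i • A i
  have hexp : O * O = ∑ i, ∑ j, (c i * c j) • (A i * A j) := by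
    simp only [O, Finset.sum_mul_sum, smul_mul_smul_comm]
  have hsymm : O * O + O * O = ∑ i, (c i * c i) • (2 : 𝕜) • (1 : R) := by
    have : O * O + O * O = ∑ i, ∑ j, (c i * c j) • (A i * A j + A j * A i) := by
      simp only [hexp, smul_add, Finset.sum_add_distrib]
      congr 1
      rw [Finset.sum_comm]
      exact Finset.sum_congr rfl fun i _ => Finset.sum_congr rfl fun j _ => by rw [mul_comm (c j)]
    simpa only [hanticomm, smul_ite, smul_zero, Finset.sum_ite_eq, Finset.mem_univ, if_true]
      using this
  calc O * O = (2 : 𝕜)⁻¹ • (O * O + O * O) := by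
        rw [← two_smul 𝕜, smul_smul, inv_mul_cancel₀ two_ne_zero, one_smul]
    _ = _ := by
        rw [hsymm, Finset.sum_smul, Finset.smul_sum]
        refine Finset.sum_congr rfl fun i _ => ?_
        module

section Expectation

variable {d : Type*} [Fintype d] {ρ : Matrix d d ℂ}

lemma Matrix.IsHermitian.trace_mul_eq_re {A : Matrix d d ℂ} (hA : A.IsHermitian)
    (hρ : ρ.IsHermitian) : (A * ρ).trace = ((A * ρ).trace.re : ℂ) := by
  have h := trace_conjTranspose (A * ρ)
  rw [conjTranspose_mul, hA.eq, hρ.eq, trace_mul_comm] at h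
  exact (Complex.conj_eq_iff_re.mp h.symm).symm

variable [DecidableEq d]

lemma le_one_of_mul_self_eq_smul_one (hρ : ρ.PosSemidef) (hρ1 : ρ.trace = 1)
    {O : Matrix d d ℂ} (hO : O.IsHermitian) {t : ℝ} (hO2 : O * O = (t : ℂ) • 1)
    (hOρ : (O * ρ).trace = t) : t ≤ 1 := by
  set B := O - (t : ℂ) • 1
  have hB : Bᴴ = B := by simp [B, hO.eq, conjTranspose_smul]
  have hBB : B * B = (t : ℂ) • 1 - (2 * t : ℂ) • O + (t ^ 2 : ℂ) • 1 := by
    simp only [B, sub_mul, mul_sub, hO2, Matrix.smul_mul, Matrix.mul_smul, smul_smul, mul_one,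
      one_mul]
    module
  have hnonneg : (0 : ℂ) ≤ ((t - t ^ 2 : ℝ) : ℂ) := by
    calc (0 : ℂ) ≤ (B * ρ * Bᴴ).trace := (hρ.mul_mul_conjTranspose_same B).trace_nonneg
      _ = (B * B * ρ).trace := by rw [hB, trace_mul_cycle]
      _ = _ := by
        simp only [hBB, add_mul, sub_mul, Matrix.smul_mul, one_mul, trace_add, trace_sub,
          trace_smul, hOρ, hρ1, smul_eq_mul]
        push_cast; ring
  nlinarith [Complex.zero_le_real.mp hnonneg]

theorem sum_sq_norm_trace_mul_le_one {ι : Type*} [Fintype ι] (hρ : ρ.PosSemidef)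
    (hρ1 : ρ.trace = 1) {A : ι → Matrix d d ℂ} (hA : ∀ i, (A i).IsHermitian)
    (hA2 : ∀ i, A i * A i = 1) (hanti : Pairwise fun i j => A i * A j = -(A j * A i)) :
    ∑ i, ‖(A i * ρ).trace‖ ^ 2 ≤ 1 := by
  set x : ι → ℝ := fun i => (A i * ρ).trace.re
  have hx : ∀ i, (A i * ρ).trace = x i := fun i => (hA i).trace_mul_eq_re hρ.isHermitian
  set O := ∑ i, (x i : ℂ) • A i
  have hO : O.IsHermitian :=
    isSelfAdjoint_sum _ fun i _ => (hA i).smul (Complex.conj_ofReal (x i))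
  have hO2 : O * O = ((∑ i, x i ^ 2 : ℝ) : ℂ) • 1 := by
    rw [sum_smul_mul_self_of_anticomm hA2 hanti]
    push_cast; rfl
  have hOρ : (O * ρ).trace = ((∑ i, x i ^ 2 : ℝ) : ℂ) := by
    simp only [O, Finset.sum_mul, Matrix.smul_mul, trace_sum, trace_smul, hx, smul_eq_mul]
    push_cast; simp [sq]
  calc ∑ i, ‖(A i * ρ).trace‖ ^ 2 = ∑ i, x i ^ 2 := by
        simp only [hx, Complex.norm_real, Real.norm_eq_abs, sq_abs]
    _ ≤ 1 := le_one_of_mul_self_eq_smul_one hρ hρ1 hO hO2 hOρ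

theorem norm_trace_mul_le_one (hρ : ρ.PosSemidef) (hρ1 : ρ.trace = 1) {A : Matrix d d ℂ}
    (hA : A.IsHermitian) (hA2 : A * A = 1) : ‖(A * ρ).trace‖ ≤ 1 := by
  have h := sum_sq_norm_trace_mul_le_one (A := fun _ : Unit => A) hρ hρ1 (fun _ => hA)
    (fun _ => hA2) Subsingleton.pairwise
  rw [Fintype.sum_unique] at h
  exact (sq_le_one_iff₀ (norm_nonneg _)).mp h

theorem norm_trace_mul_mul_le_one_of_commute (hρ : ρ.PosSemidef) (hρ1 : ρ.trace = 1)
    {A B : Matrix d d ℂ} (hA : A.IsHermitian) (hB : B.IsHermitian) (hA2 : A * A = 1)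
    (hB2 : B * B = 1) (hAB : Commute A B) : ‖(A * B * ρ).trace‖ ≤ 1 := by
  refine norm_trace_mul_le_one hρ hρ1 ((hA.commute_iff hB).mp hAB) ?_
  rw [hAB.symm.mul_mul_mul_comm, hA2, hB2, one_mul]

theorem norm_trace_mul_sq_add_le_one_of_anticommute (hρ : ρ.PosSemidef) (hρ1 : ρ.trace = 1)
    {A B : Matrix d d ℂ} (hA : A.IsHermitian) (hB : B.IsHermitian) (hA2 : A * A = 1)
    (hB2 : B * B = 1) (hAB : A * B = -(B * A)) :
    ‖(A * ρ).trace‖ ^ 2 + ‖(B * ρ).trace‖ ^ 2 + ‖(A * B * ρ).trace‖ ^ 2 ≤ 1 := by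
  -- `A * B` is anti-Hermitian; `C = -i A B` is a Hermitian involution anticommuting with `A`, `B`.
  set C := (-Complex.I) • (A * B)
  have hABA : A * B * A = -B := by rw [hAB, neg_mul, mul_assoc, hA2, mul_one]
  have hBAB : B * (A * B) = -A := by rw [hAB, mul_neg, ← mul_assoc, hB2, one_mul]
  have hC : C.IsHermitian := by
    simp [C, IsHermitian, conjTranspose_smul, conjTranspose_mul, hA.eq, hB.eq, hAB]
  have hC2 : C * C = 1 := by
    simp only [C, Matrix.smul_mul, Matrix.mul_smul, smul_smul, ← mul_assoc, hABA, neg_mul, hB2]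
    simp [Complex.I_mul_I]
  have hAC : A * C = -(C * A) := by
    simp only [C, Matrix.mul_smul, Matrix.smul_mul, ← mul_assoc, hABA, hA2, one_mul, smul_neg]
    rw [neg_neg]
  have hBC : B * C = -(C * B) := by
    rw [Matrix.mul_smul, Matrix.smul_mul, hBAB, mul_assoc, hB2, mul_one, smul_neg]
  have hCρ : ‖(C * ρ).trace‖ = ‖(A * B * ρ).trace‖ := by
    simp [C, trace_smul]
  have h := sum_sq_norm_trace_mul_le_one (A := ![A, B, C]) hρ hρ1
    (by simp [Fin.forall_fin_succ, hA, hB, hC]) (by simp [Fin.forall_fin_succ, hA2, hB2, hC2])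
    (by intro i j hij; fin_cases i <;> fin_cases j <;> simp_all)
  simpa [Fin.sum_univ_three, hCρ] using h

end Expectation

namespace Matrix

variable {ι m : Type*} [Fintype ι]

section CommSemiring

variable {R : Type*} [CommSemiring R]

def piTensor (A : ι → Matrix m m R) : Matrix (ι → m) (ι → m) R :=
  of fun f g => ∏ i, A i (f i) (g i)

@[simp]
lemma piTensor_apply (A : ι → Matrix m m R) (f g : ι → m) :
    piTensor A f g = ∏ i, A i (f i) (g i) := rfl

lemma piTensor_mul [DecidableEq ι] [Fintype m] (A B : ι → Matrix m m R) :
    piTensor A * piTensor B = piTensor fun i => A i * B i := by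
  ext f h
  simp only [mul_apply, piTensor_apply, ← Finset.prod_mul_distrib]
  exact (Fintype.prod_sum fun i x => A i (f i) x * B i x (h i)).symm

lemma piTensor_one [DecidableEq m] : piTensor (fun _ : ι => (1 : Matrix m m R)) = 1 := by
  ext f g
  by_cases hfg : f = g
  · simp [hfg, one_apply]
  · obtain ⟨i, hi⟩ := Function.ne_iff.mp hfg
    rw [one_apply_ne hfg, piTensor_apply]
    exact Finset.prod_eq_zero (Finset.mem_univ i) (one_apply_ne hi)

lemma piTensor_mul_self [DecidableEq ι] [Fintype m] [DecidableEq m] {A : ι → Matrix m m R}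
    (hA : ∀ i, A i * A i = 1) : piTensor A * piTensor A = 1 := by
  simp only [piTensor_mul, hA, piTensor_one]

lemma isHermitian_piTensor [StarRing R] {A : ι → Matrix m m R} (hA : ∀ i, (A i).IsHermitian) :
    (piTensor A).IsHermitian := by
  ext f g
  simp only [conjTranspose_apply, piTensor_apply, star_prod]
  exact Finset.prod_congr rfl fun i _ => (hA i).apply (f i) (g i)

lemma piTensor_smul (c : ι → R) (A : ι → Matrix m m R) :
    piTensor (fun i => c i • A i) = (∏ i, c i) • piTensor A := by
  ext f g
  simp [Finset.prod_mul_distrib]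

lemma commute_piTensor [DecidableEq ι] [Fintype m] {A B : ι → Matrix m m R}
    (h : ∀ i, Commute (A i) (B i)) : Commute (piTensor A) (piTensor B) := by
  simp only [Commute, SemiconjBy, piTensor_mul, (h _).eq]

end CommSemiring

lemma piTensor_mul_eq_neg {R : Type*} [CommRing R] [DecidableEq ι] [Fintype m]
    {A B : ι → Matrix m m R} (i₀ : ι) (h₀ : A i₀ * B i₀ = -(B i₀ * A i₀))
    (h : ∀ i ≠ i₀, Commute (A i) (B i)) :
    piTensor A * piTensor B = -(piTensor B * piTensor A) := by
  have hsign : (fun i => A i * B i) = fun i => (if i = i₀ then -1 else 1 : R) • (B i * A i) := by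
    funext i
    split_ifs with hi
    · subst hi; rw [h₀, neg_one_smul]
    · rw [one_smul, (h i hi).eq]
  rw [piTensor_mul, piTensor_mul, hsign, piTensor_smul, Finset.prod_ite_eq' Finset.univ i₀,
    if_pos (Finset.mem_univ _), neg_one_smul]

end Matrix

section ProductState

variable {n k : ℕ} (P : Fin n → Fin k)

def fiberwiseEquiv : (Fin n → Fin 2) ≃ ∀ j, {v : Fin n // P v = j} → Fin 2 :=
  Equiv.piCongrFiberwise fun _ => Equiv.refl _

lemma piTensor_mul_prodState (A : Fin n → Matrix (Fin 2) (Fin 2) ℂ)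
    (ρs : ∀ j, Matrix ({v : Fin n // P v = j} → Fin 2) ({v : Fin n // P v = j} → Fin 2) ℂ) :
    piTensor A * prodState P ρs =
      prodState P fun j => piTensor (fun v : {v : Fin n // P v = j} => A v) * ρs j := by
  ext f h
  simp only [mul_apply, piTensor_apply, prodState, of_apply, Fintype.prod_sum]
  rw [← (fiberwiseEquiv P).sum_comp]
  refine Finset.sum_congr rfl fun g _ => ?_
  rw [Finset.prod_mul_distrib, ← Fintype.prod_fiberwise P]
  rfl

lemma trace_prodState
    (σs : ∀ j, Matrix ({v : Fin n // P v = j} → Fin 2) ({v : Fin n // P v = j} → Fin 2) ℂ) :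
    (prodState P σs).trace = ∏ j, (σs j).trace := by
  simp only [trace, diag, prodState, of_apply, Fintype.prod_sum]
  exact (fiberwiseEquiv P).sum_comp fun F => ∏ j, σs j (F j) (F j)

end ProductState

lemma pX_isHermitian : pX.IsHermitian := by
  ext i j; fin_cases i <;> fin_cases j <;> simp [pX]

lemma pZ_isHermitian : pZ.IsHermitian := by
  ext i j; fin_cases i <;> fin_cases j <;> simp [pZ]

lemma pX_mul_self : pX * pX = 1 := by
  ext i j; fin_cases i <;> fin_cases j <;> simp [pX, mul_apply, one_apply]

lemma pZ_mul_self : pZ * pZ = 1 := by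
  ext i j; fin_cases i <;> fin_cases j <;> simp [pZ, mul_apply, one_apply]

lemma pX_mul_pZ : pX * pZ = -(pZ * pX) := by
  ext i j; fin_cases i <;> fin_cases j <;> simp [pX, pZ, mul_apply]

section Stabilizer

variable {n : ℕ} (G : SimpleGraph (Fin n)) [DecidableRel G.Adj]

noncomputable def stabFactor (i j : Fin n) : Matrix (Fin 2) (Fin 2) ℂ :=
  if j = i then pX else if G.Adj i j then pZ else 1

lemma stab_eq_piTensor (i : Fin n) : stab G i = piTensor (stabFactor G i) := rfl

lemma isHermitian_stabFactor (i j : Fin n) : (stabFactor G i j).IsHermitian := by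
  unfold stabFactor
  split_ifs
  exacts [pX_isHermitian, pZ_isHermitian, isHermitian_one]

lemma stabFactor_mul_self (i j : Fin n) : stabFactor G i j * stabFactor G i j = 1 := by
  unfold stabFactor
  split_ifs
  exacts [pX_mul_self, pZ_mul_self, one_mul 1]

lemma commute_stabFactor {i i' j : Fin n} (hi : j ≠ i) (hi' : j ≠ i') :
    Commute (stabFactor G i j) (stabFactor G i' j) := by
  simp only [stabFactor, if_neg hi, if_neg hi']
  split_ifs <;> simp

variable {k : ℕ} (P : Fin n → Fin k)

noncomputable def stabPart (i : Fin n) (j : Fin k) :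
    Matrix ({v : Fin n // P v = j} → Fin 2) ({v : Fin n // P v = j} → Fin 2) ℂ :=
  piTensor fun v : {v : Fin n // P v = j} => stabFactor G i v

variable (ρs : ∀ j, Matrix ({v : Fin n // P v = j} → Fin 2) ({v : Fin n // P v = j} → Fin 2) ℂ)

lemma trace_stab_mul_prodState (i : Fin n) :
    (stab G i * prodState P ρs).trace = ∏ j, (stabPart G P i j * ρs j).trace := by
  rw [stab_eq_piTensor, piTensor_mul_prodState, trace_prodState]
  rfl

lemma trace_stab_mul_stab_mul_prodState (i i' : Fin n) :
    (stab G i * stab G i' * prodState P ρs).trace =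
      ∏ j, (stabPart G P i j * stabPart G P i' j * ρs j).trace := by
  rw [stab_eq_piTensor, stab_eq_piTensor, piTensor_mul, piTensor_mul_prodState, trace_prodState]
  simp only [stabPart, piTensor_mul]

lemma isHermitian_stabPart (i : Fin n) (j : Fin k) : (stabPart G P i j).IsHermitian :=
  isHermitian_piTensor fun v => isHermitian_stabFactor G i v

lemma stabPart_mul_self (i : Fin n) (j : Fin k) : stabPart G P i j * stabPart G P i j = 1 :=
  piTensor_mul_self fun v => stabFactor_mul_self G i v

lemma commute_stabPart {i i' : Fin n} {j : Fin k} (hi : j ≠ P i) (hi' : j ≠ P i') :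
    Commute (stabPart G P i j) (stabPart G P i' j) :=
  commute_piTensor fun v =>
    commute_stabFactor G (fun h => hi (h ▸ v.2.symm)) (fun h => hi' (h ▸ v.2.symm))

lemma stabPart_anticomm_of_adj {i i' : Fin n} (h : G.Adj i i') (hP : P i ≠ P i') :
    stabPart G P i (P i) * stabPart G P i' (P i) =
      -(stabPart G P i' (P i) * stabPart G P i (P i)) :=
  piTensor_mul_eq_neg ⟨i, rfl⟩ (by simp [stabFactor, h.ne, h.symm, pX_mul_pZ])
    fun v hv => commute_stabFactor G (fun h => hv (Subtype.ext h))
      (fun h => hP (h ▸ v.2.symm))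

variable {j : Fin k} {ρ : Matrix ({v : Fin n // P v = j} → Fin 2)
  ({v : Fin n // P v = j} → Fin 2) ℂ}

lemma norm_trace_stabPart_mul_le_one (hρ : ρ.PosSemidef) (hρ1 : ρ.trace = 1) (i : Fin n) :
    ‖(stabPart G P i j * ρ).trace‖ ≤ 1 :=
  norm_trace_mul_le_one hρ hρ1 (isHermitian_stabPart G P i j) (stabPart_mul_self G P i j)

lemma norm_trace_stabPart_mul_stabPart_mul_le_one (hρ : ρ.PosSemidef) (hρ1 : ρ.trace = 1)
    {i i' : Fin n} (hi : j ≠ P i) (hi' : j ≠ P i') :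
    ‖(stabPart G P i j * stabPart G P i' j * ρ).trace‖ ≤ 1 :=
  norm_trace_mul_mul_le_one_of_commute hρ hρ1 (isHermitian_stabPart G P i j)
    (isHermitian_stabPart G P i' j) (stabPart_mul_self G P i j) (stabPart_mul_self G P i' j)
    (commute_stabPart G P hi hi')

lemma norm_trace_stabPart_sq_add_le_one (hρ : ρ.PosSemidef) (hρ1 : ρ.trace = 1) {i i' : Fin n}
    (hanti : stabPart G P i j * stabPart G P i' j = -(stabPart G P i' j * stabPart G P i j)) :
    ‖(stabPart G P i j * ρ).trace‖ ^ 2 + ‖(stabPart G P i' j * ρ).trace‖ ^ 2 +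
      ‖(stabPart G P i j * stabPart G P i' j * ρ).trace‖ ^ 2 ≤ 1 :=
  norm_trace_mul_sq_add_le_one_of_anticommute hρ hρ1 (isHermitian_stabPart G P i j)
    (isHermitian_stabPart G P i' j) (stabPart_mul_self G P i j) (stabPart_mul_self G P i' j) hanti

end Stabilizer

lemma prod_le_mul_of_le_one {k : ℕ} {F : Fin k → ℝ} (h0 : ∀ j, 0 ≤ F j) {a b : Fin k}
    (hab : a ≠ b) (h1 : ∀ j, j ≠ a → j ≠ b → F j ≤ 1) : ∏ j, F j ≤ F a * F b := by
  rw [← Finset.prod_pair hab]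
  refine Finset.prod_le_prod_of_subset_of_le_one (Finset.subset_univ _) (fun j _ => h0 j) ?_
  intro j _ hj
  simp only [Finset.mem_insert, Finset.mem_singleton, not_or] at hj
  exact h1 j hj.1 hj.2

/-- **Stabilizer triple bound for product states across a cut edge.** If `ρ = ⊗_j ρ_j` is a
product state with respect to a partition `P` of the `n` qubits and `(a,b)` is an edge of `G`
with `a`, `b` in different parts, then `|⟨S_a⟩| + |⟨S_b⟩| + |⟨S_a S_b⟩| ≤ 1`. -/
theorem stmt9 {n k : ℕ} (G : SimpleGraph (Fin n)) [DecidableRel G.Adj]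
    (P : Fin n → Fin k)
    (ρs : ∀ j : Fin k,
      Matrix ({v : Fin n // P v = j} → Fin 2) ({v : Fin n // P v = j} → Fin 2) ℂ)
    (hρs : ∀ j, (ρs j).PosSemidef ∧ (ρs j).trace = 1)
    (a b : Fin n) (hab : G.Adj a b) (hP : P a ≠ P b) :
    ‖(stab G a * prodState P ρs).trace‖ +
      ‖(stab G b * prodState P ρs).trace‖ +
      ‖(stab G a * stab G b * prodState P ρs).trace‖ ≤ 1 := by
  rw [trace_stab_mul_prodState, trace_stab_mul_prodState, trace_stab_mul_stab_mul_prodState,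
    norm_prod, norm_prod, norm_prod]
  have hx := prod_le_mul_of_le_one (fun _ => norm_nonneg _) hP fun j _ _ =>
    norm_trace_stabPart_mul_le_one G P (hρs j).1 (hρs j).2 a
  have hy := prod_le_mul_of_le_one (fun _ => norm_nonneg _) hP fun j _ _ =>
    norm_trace_stabPart_mul_le_one G P (hρs j).1 (hρs j).2 b
  have hz := prod_le_mul_of_le_one (fun _ => norm_nonneg _) hP fun j ha hb =>
    norm_trace_stabPart_mul_stabPart_mul_le_one G P (hρs j).1 (hρs j).2 ha hb
  have hcut_a := norm_trace_stabPart_sq_add_le_one G P (hρs (P a)).1 (hρs (P a)).2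
    (stabPart_anticomm_of_adj G P hab hP)
  have hcut_b := norm_trace_stabPart_sq_add_le_one G P (hρs (P b)).1 (hρs (P b)).2
    (neg_eq_iff_eq_neg.mp (stabPart_anticomm_of_adj G P hab.symm hP.symm).symm)
  set A := stabPart G P a
  set B := stabPart G P b
  linarith [two_mul_le_add_sq ‖(A (P a) * ρs (P a)).trace‖ ‖(A (P b) * ρs (P b)).trace‖,
    two_mul_le_add_sq ‖(B (P a) * ρs (P a)).trace‖ ‖(B (P b) * ρs (P b)).trace‖,
    two_mul_le_add_sq ‖(A (P a) * B (P a) * ρs (P a)).trace‖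
      ‖(A (P b) * B (P b) * ρs (P b)).trace‖]
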